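/- Let K be a symmetric positive semidefinite T × T real matrix with K_{ii} ≤ 1, λ ≥ 1, and σ_t² = λ^{-1}(K_{tt} − k_t^T (K^{(t-1)} + λI)^{-1} k_t) as above. Then σ_t² ≤ λ^{-1} ≤ 1 for every t, and Σ_{t=1}^T σ_t² ≤ (2 + λ^{-1}) · (1/2) ln det(I + λ^{-1} K). -/

import Mathlib

/-!
The Schur complement of the leading `t × t` block of `K + λI` inside its leading
`(t + 1) × (t + 1)` block is `λ (1 + σ_t²)`, so peeling off one row and column at a
time gives `det (I + λ⁻¹ K) = ∏ (1 + σ_t²)`. Each `σ_t²` lies in `[0, λ⁻¹]`: the upper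
bound because `(K^{(t-1)} + λI)⁻¹` is positive definite and `K_tt ≤ 1`, the lower bound
because `λ σ_t²` is also a Schur complement of a positive semidefinite matrix. The sum
bound is then termwise `x ≤ (1 + c / 2) log (1 + x)` for `0 ≤ x ≤ c`, from
`log (1 + x) ≥ 2x / (2 + x)`.
-/

open Matrix Real

theorem two_mul_le_two_add_mul_log_one_add {x : ℝ} (hx : 0 ≤ x) :
    2 * x ≤ (2 + x) * log (1 + x) := by
  rcases hx.eq_or_lt with rfl | hx
  · simp
  -- the `k = 0` term of the series `log (1 + a⁻¹) = ∑ 2 / ((2k + 1) (2a + 1) ^ (2k + 1))`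
  have h := le_hasSum (hasSum_log_one_add_inv (inv_pos.mpr hx)) 0 fun k _ => by positivity
  have hfirst : 2 * (1 / (2 * ((0 : ℕ) : ℝ) + 1)) * (1 / (2 * x⁻¹ + 1)) ^ (2 * 0 + 1) =
      2 * x / (2 + x) := by
    norm_num
    field_simp
  rw [inv_inv, hfirst, div_le_iff₀ (by positivity)] at h
  linarith

theorem le_two_add_mul_half_log_one_add {x c : ℝ} (hx : 0 ≤ x) (hxc : x ≤ c) :
    x ≤ (2 + c) * (1 / 2 * log (1 + x)) := by
  have hlog : 0 ≤ log (1 + x) := log_nonneg (by linarith)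
  nlinarith [two_mul_le_two_add_mul_log_one_add hx]

namespace Matrix

variable {R : Type*} [CommRing R] {n : ℕ}

/-- The Schur complement of the leading `t × t` block in the leading `(t + 1) × (t + 1)` block. -/
noncomputable def leadingSchur (M : Matrix (Fin n) (Fin n) R) (t : Fin n) : R :=
  M t t - (fun j => M t (Fin.castLE t.isLt.le j)) ⬝ᵥ
    ((M.submatrix (Fin.castLE t.isLt.le) (Fin.castLE t.isLt.le))⁻¹ *ᵥ
      fun i => M (Fin.castLE t.isLt.le i) t)

theorem submatrix_finSumFinEquiv_eq_fromBlocks {α : Type*}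
    (M : Matrix (Fin (n + 1)) (Fin (n + 1)) α) :
    M.submatrix finSumFinEquiv finSumFinEquiv =
      fromBlocks (M.submatrix Fin.castSucc Fin.castSucc)
        (replicateCol (Fin 1) fun i : Fin n => M i.castSucc (Fin.last n))
        (replicateRow (Fin 1) fun j : Fin n => M (Fin.last n) j.castSucc)
        (of fun _ _ => M (Fin.last n) (Fin.last n)) := by
  ext (i | i) (j | j) <;> simp [Fin.eq_zero] <;> rfl

theorem leadingSchur_last_eq_schur_apply (M : Matrix (Fin (n + 1)) (Fin (n + 1)) R) :
    M.leadingSchur (Fin.last n) =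
      (of (fun _ _ : Fin 1 => M (Fin.last n) (Fin.last n)) -
        replicateRow (Fin 1) (fun j : Fin n => M (Fin.last n) j.castSucc) *
          (M.submatrix Fin.castSucc Fin.castSucc)⁻¹ *
            replicateCol (Fin 1) fun i : Fin n => M i.castSucc (Fin.last n)) 0 0 := by
  rw [sub_apply, ← replicateRow_vecMul, replicateRow_mul_replicateCol_apply,
    ← dotProduct_mulVec]
  rfl

theorem det_succ_eq_det_mul_leadingSchur_last (M : Matrix (Fin (n + 1)) (Fin (n + 1)) R)
    (h : IsUnit (M.submatrix Fin.castSucc Fin.castSucc).det) :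
    M.det = (M.submatrix Fin.castSucc Fin.castSucc).det * M.leadingSchur (Fin.last n) := by
  have := invertibleOfIsUnitDet _ h
  rw [← det_submatrix_equiv_self finSumFinEquiv, submatrix_finSumFinEquiv_eq_fromBlocks,
    det_fromBlocks₁₁, det_fin_one, invOf_eq_nonsing_inv, leadingSchur_last_eq_schur_apply]

theorem det_eq_prod_leadingSchur (M : Matrix (Fin n) (Fin n) R)
    (h : ∀ t : Fin n, IsUnit (M.submatrix (Fin.castLE t.isLt.le) (Fin.castLE t.isLt.le)).det) :
    M.det = ∏ t, M.leadingSchur t := by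
  induction n with
  | zero => simp
  | succ n ih =>
    rw [Fin.prod_univ_castSucc, det_succ_eq_det_mul_leadingSchur_last M (h (Fin.last n)),
      ih _ fun t => h t.castSucc]
    rfl

section StarOrdered

variable {𝕜 : Type*} [Field 𝕜] [PartialOrder 𝕜] [StarRing 𝕜] [StarOrderedRing 𝕜]

theorem PosSemidef.leadingSchur_last_nonneg {M : Matrix (Fin (n + 1)) (Fin (n + 1)) 𝕜}
    (hM : M.PosSemidef) (hA : (M.submatrix Fin.castSucc Fin.castSucc).PosDef) :
    0 ≤ M.leadingSchur (Fin.last n) := by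
  have := hA.isUnit.invertible
  have hblocks := (posSemidef_submatrix_equiv finSumFinEquiv).mpr hM
  rw [submatrix_finSumFinEquiv_eq_fromBlocks] at hblocks
  have hrow : (replicateRow (Fin 1) fun j : Fin n => M (Fin.last n) j.castSucc) =
      (replicateCol (Fin 1) fun i : Fin n => M i.castSucc (Fin.last n))ᴴ := by
    ext _ j
    exact (hM.isHermitian.apply _ _).symm
  rw [hrow, PosDef.fromBlocks₁₁ _ _ hA, ← hrow] at hblocks
  rw [leadingSchur_last_eq_schur_apply]
  exact hblocks.diag_nonneg

theorem PosSemidef.leadingSchur_nonneg {M : Matrix (Fin n) (Fin n) 𝕜} (hM : M.PosSemidef)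
    (t : Fin n) (hA : (M.submatrix (Fin.castLE t.isLt.le) (Fin.castLE t.isLt.le)).PosDef) :
    0 ≤ M.leadingSchur t :=
  (hM.submatrix (Fin.castLE t.isLt)).leadingSchur_last_nonneg hA

end StarOrdered

theorem submatrix_add_diagonal_eq_add_smul_one {m l : Type*} [DecidableEq m] [DecidableEq l]
    (A : Matrix m m R) {d : m → R} {e : l → m} (he : Function.Injective e) {c : R}
    (hd : ∀ i, d (e i) = c) :
    (A + diagonal d).submatrix e e = A.submatrix e e + c • 1 := by
  change A.submatrix e e + (diagonal d).submatrix e e = _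
  rw [submatrix_diagonal _ _ he, smul_one_eq_diagonal]
  exact congrArg _ (congrArg _ (funext hd))

theorem posDef_submatrix_add_smul_one {m l : Type*} [Fintype l] [DecidableEq l]
    {A : Matrix m m ℝ} (hA : A.PosSemidef) (e : l → m) {c : ℝ} (hc : 0 < c) :
    (A.submatrix e e + c • 1).PosDef :=
  PosDef.posSemidef_add (hA.submatrix e) (PosDef.one.smul hc)

end Matrix

theorem Fin.castLE_lt_self {n : ℕ} (t : Fin n) (i : Fin t.val) : Fin.castLE t.isLt.le i < t :=
  i.isLt

section PosteriorVariance

variable {n : ℕ} (K : Matrix (Fin n) (Fin n) ℝ) (lam : ℝ)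

/-- `σ_t²` of the paper, with `0`-based indices: `t` is conditioned on `0, …, t - 1`. -/
noncomputable def posteriorVariance (t : Fin n) : ℝ :=
  lam⁻¹ * (K t t - (fun i : Fin t.val => K (Fin.castLE t.isLt.le i) t) ⬝ᵥ
    ((K.submatrix (Fin.castLE t.isLt.le) (Fin.castLE t.isLt.le) + lam • 1)⁻¹ *ᵥ
      fun i => K (Fin.castLE t.isLt.le i) t))

variable {K lam}

theorem leadingSchur_add_diagonal (hK : K.IsHermitian) (hlam : lam ≠ 0) {d : Fin n → ℝ}
    {t : Fin n} (hd : ∀ i : Fin t.val, d (Fin.castLE t.isLt.le i) = lam) :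
    (K + diagonal d).leadingSchur t = d t + lam * posteriorVariance K lam t := by
  have hne (i : Fin t.val) := (Fin.castLE_lt_self t i).ne
  rw [leadingSchur, submatrix_add_diagonal_eq_add_smul_one _ (Fin.castLE_injective _) hd,
    posteriorVariance, mul_inv_cancel_left₀ hlam]
  have hcol : (fun i => (K + diagonal d) (Fin.castLE t.isLt.le i) t) =
      fun i => K (Fin.castLE t.isLt.le i) t :=
    funext fun i => by rw [Matrix.add_apply, diagonal_apply_ne _ (hne i), add_zero]
  have hrow : (fun j => (K + diagonal d) t (Fin.castLE t.isLt.le j)) =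
      fun j => K (Fin.castLE t.isLt.le j) t :=
    funext fun j => by
      rw [Matrix.add_apply, diagonal_apply_ne _ (hne j).symm, add_zero, ← hK.apply, star_trivial]
  rw [hcol, hrow, Matrix.add_apply, diagonal_apply_eq]
  ring

theorem posteriorVariance_nonneg (hK : K.PosSemidef) (hlam : 0 < lam) (t : Fin n) :
    0 ≤ posteriorVariance K lam t := by
  -- `K + λ · diag(1, …, 1, 0, 1, …)`, with the `0` at `t`, is PSD,
  -- and its Schur complement at `t` is `λ σ_t²`
  set d := Function.update (fun _ => lam) t 0
  have hd (i : Fin t.val) : d (Fin.castLE t.isLt.le i) = lam :=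
    Function.update_of_ne (Fin.castLE_lt_self t i).ne _ _
  have hQ : (K + diagonal d).PosSemidef := hK.add (PosSemidef.diagonal fun i => by
    by_cases hi : i = t <;> simp [d, hi, hlam.le])
  have hschur := hQ.leadingSchur_nonneg t (by
    rw [submatrix_add_diagonal_eq_add_smul_one _ (Fin.castLE_injective _) hd]
    exact posDef_submatrix_add_smul_one hK _ hlam)
  rw [leadingSchur_add_diagonal hK.isHermitian hlam.ne' hd,
    show d t = 0 from Function.update_self .., zero_add] at hschur
  exact (mul_nonneg_iff_of_pos_left hlam).mp hschur

theorem posteriorVariance_le_inv (hK : K.PosSemidef) (hlam : 0 < lam) {t : Fin n}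
    (ht : K t t ≤ 1) : posteriorVariance K lam t ≤ lam⁻¹ := by
  have hq := (posDef_submatrix_add_smul_one hK (Fin.castLE t.isLt.le) hlam).inv.posSemidef
    |>.dotProduct_mulVec_nonneg fun i => K (Fin.castLE t.isLt.le i) t
  rw [star_trivial] at hq
  calc posteriorVariance K lam t ≤ lam⁻¹ * 1 := by
        rw [posteriorVariance]; gcongr; linarith
    _ = lam⁻¹ := mul_one _

theorem det_one_add_inv_smul_eq_prod (hK : K.PosSemidef) (hlam : 0 < lam) :
    (1 + lam⁻¹ • K).det = ∏ t, (1 + posteriorVariance K lam t) := by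
  have hd (t : Fin n) (i : Fin t.val) : (fun _ => lam) (Fin.castLE t.isLt.le i) = lam := rfl
  have hprod : (K + lam • 1).det = ∏ t, lam * (1 + posteriorVariance K lam t) := by
    rw [smul_one_eq_diagonal, det_eq_prod_leadingSchur]
    · refine Finset.prod_congr rfl fun t _ => ?_
      rw [leadingSchur_add_diagonal hK.isHermitian hlam.ne' (hd t)]
      ring
    · intro t
      rw [submatrix_add_diagonal_eq_add_smul_one _ (Fin.castLE_injective _) (hd t)]
      exact (posDef_submatrix_add_smul_one hK _ hlam).det_pos.ne'.isUnit
  calc (1 + lam⁻¹ • K).det = (lam⁻¹ • (K + lam • 1)).det := by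
        rw [smul_add, smul_smul, inv_mul_cancel₀ hlam.ne', one_smul, add_comm]
    _ = ∏ t, (1 + posteriorVariance K lam t) := by
        rw [det_smul, hprod, Finset.prod_mul_distrib, Finset.prod_const, Finset.card_univ,
          Fintype.card_fin, ← mul_assoc, ← mul_pow, inv_mul_cancel₀ hlam.ne', one_pow,
          one_mul]

end PosteriorVariance

theorem stmt12_general (T : ℕ)
    (K : Matrix (Fin T) (Fin T) ℝ)
    (hK : K.PosSemidef) (hKdiag : ∀ i, K i i ≤ 1)
    (lam : ℝ) (hlam : 1 ≤ lam)
    (σsq : Fin T → ℝ)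
    (hσsq : ∀ t : Fin T, σsq t =
      lam⁻¹ * (K t t -
        (fun i : Fin t.val => K (Fin.castLE t.isLt.le i) t) ⬝ᵥ
          (((Matrix.of fun i j : Fin t.val =>
                K (Fin.castLE t.isLt.le i) (Fin.castLE t.isLt.le j)) +
              lam • (1 : Matrix (Fin t.val) (Fin t.val) ℝ))⁻¹ *ᵥ
            fun i : Fin t.val => K (Fin.castLE t.isLt.le i) t))) :
    (∀ t : Fin T, σsq t ≤ lam⁻¹) ∧ lam⁻¹ ≤ 1 ∧
    ∑ t : Fin T, σsq t ≤ (2 + lam⁻¹) * ((1 / 2) * Real.log (1 + lam⁻¹ • K).det) := by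
  have hlam₀ : 0 < lam := one_pos.trans_le hlam
  obtain rfl : σsq = posteriorVariance K lam := funext hσsq
  have hnonneg := posteriorVariance_nonneg hK hlam₀
  have hle (t : Fin T) := posteriorVariance_le_inv hK hlam₀ (hKdiag t)
  refine ⟨hle, inv_le_one_of_one_le₀ hlam, ?_⟩
  rw [det_one_add_inv_smul_eq_prod hK hlam₀,
    log_prod fun t _ => (add_pos_of_pos_of_nonneg one_pos (hnonneg t)).ne',
    Finset.mul_sum, Finset.mul_sum]
  exact Finset.sum_le_sum fun t _ => le_two_add_mul_half_log_one_add (hnonneg t) (hle t)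

/-- For a symmetric PSD Gram matrix `K` with `K_{ii} ≤ 1` and `λ ≥ 1`, with
`σ_t² = λ^{-1}(K_{tt} - k_t^T (K^{(t-1)} + λI)^{-1} k_t)`, one has `σ_t² ≤ λ^{-1} ≤ 1`
for every `t`, and `Σ_{t=1}^T σ_t² ≤ (2 + λ^{-1}) · (1/2) ln det(I + λ^{-1} K)`. -/
theorem stmt12 (T : ℕ) (hT : 0 < T)
    (K : Matrix (Fin T) (Fin T) ℝ)
    (hK : K.PosSemidef) (hKdiag : ∀ i, K i i ≤ 1)
    (lam : ℝ) (hlam : 1 ≤ lam)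
    (σsq : Fin T → ℝ)
    (hσsq : ∀ t : Fin T, σsq t =
      lam⁻¹ * (K t t -
        (fun i : Fin t.val => K (Fin.castLE t.isLt.le i) t) ⬝ᵥ
          (((Matrix.of fun i j : Fin t.val =>
                K (Fin.castLE t.isLt.le i) (Fin.castLE t.isLt.le j)) +
              lam • (1 : Matrix (Fin t.val) (Fin t.val) ℝ))⁻¹ *ᵥ
            fun i : Fin t.val => K (Fin.castLE t.isLt.le i) t))) :
    (∀ t : Fin T, σsq t ≤ lam⁻¹) ∧ lam⁻¹ ≤ 1 ∧
    ∑ t : Fin T, σsq t ≤ (2 + lam⁻¹) * ((1 / 2) * Real.log (1 + lam⁻¹ • K).det) :=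
  stmt12_general T K hK hKdiag lam hlam σsq hσsq
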